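/- arXiv:1203.6801 — 4 statements merged into one kernel-verified Lean document; each statement's English description precedes it below -/
import Mathlib

section
/- In the *-algebra O(Σ³_q), for all m ∈ ℕ: (ζ₀*)^m ζ₀^m = ∏_{p=1}^{m} (1 − q^{−2p} ζ₁² ξ). -/
/-!
The relations give `ζ₀* ζ₀ = 1 - q⁻² c` and `c ζ₀ = q⁻² ζ₀ c` for `c = ζ₁² ξ`. Peeling the innermost
`ζ₀* ζ₀` off `(ζ₀*)^(m+1) ζ₀^(m+1)` and commuting `c` to the right through `ζ₀^m` produces
`(ζ₀*)^m ζ₀^m (1 - q^(-2(m+1)) c)`, so the product builds up one factor at a time.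
-/

section QCommuting

variable {R A : Type*}

theorem mul_pow_eq_smul_pow_mul [CommSemiring R] [Semiring A] [Algebra R A] {a c : A} {r : R}
    (h : c * a = r • (a * c)) (n : ℕ) : c * a ^ n = r ^ n • (a ^ n * c) := by
  induction n with
  | zero => simp
  | succ n ih =>
    calc c * a ^ (n + 1) = (c * a ^ n) * a := by rw [pow_succ, mul_assoc]
      _ = r ^ n • (a ^ n * (c * a)) := by rw [ih, smul_mul_assoc, mul_assoc]
      _ = r ^ (n + 1) • (a ^ (n + 1) * c) := by
        rw [h, mul_smul_comm, smul_smul, ← pow_succ, ← mul_assoc, ← pow_succ]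

theorem pow_mul_pow_eq_prod_of_mul_eq_one_sub_smul [CommRing R] [Ring A] [Algebra R A]
    {a b c : A} {r : R} (hba : b * a = 1 - r • c) (hca : c * a = r • (a * c)) (m : ℕ) :
    b ^ m * a ^ m = ((List.range m).map fun p => 1 - r ^ (p + 1) • c).prod := by
  induction m with
  | zero => simp
  | succ m ih =>
    calc b ^ (m + 1) * a ^ (m + 1) = b ^ m * ((b * a) * a ^ m) := by
          rw [pow_succ, pow_succ']; simp only [mul_assoc]
      _ = b ^ m * a ^ m - r • (b ^ m * (c * a ^ m)) := by
          rw [hba, sub_mul, one_mul, mul_sub, smul_mul_assoc, mul_smul_comm]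
      _ = b ^ m * a ^ m * (1 - r ^ (m + 1) • c) := by
          rw [mul_pow_eq_smul_pow_mul hca, mul_smul_comm, smul_smul, ← pow_succ', mul_sub,
            mul_one, mul_smul_comm, mul_assoc]
      _ = _ := by rw [ih, List.range_succ, List.map_append, List.prod_append]; simp

end QCommuting

theorem zeta_power_relation_right_general {A : Type*} [Ring A] [Algebra ℝ A] [StarRing A]
    (q : ℝ) (hq : q ∈ Set.Ioo (0 : ℝ) 1)
    (ζ₀ ζ₁ : A) (ξ : Aˣ)
    (hcentral : ∀ x : A, (ξ : A) * x = x * (ξ : A))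
    (hrel1 : ζ₀ * ζ₁ = q • (ζ₁ * ζ₀))
    (hrel2 : ζ₀ * star ζ₀ = star ζ₀ * ζ₀ + (q ^ (-2 : ℤ) - 1) • (ζ₁ ^ 2 * (ξ : A)))
    (hrel3 : ζ₀ * star ζ₀ + ζ₁ ^ 2 * (ξ : A) = 1)
    (m : ℕ) :
    (star ζ₀) ^ m * ζ₀ ^ m =
      ((List.range m).map
        (fun p => (1 : A) - q ^ (-(2 * ((p : ℤ) + 1))) • (ζ₁ ^ 2 * (ξ : A)))).prod := by
  have hζ₁ : ζ₁ ^ 2 * ζ₀ = q ^ (-2 : ℤ) • (ζ₀ * ζ₁ ^ 2) := by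
    rw [mul_pow_eq_smul_pow_mul hrel1, smul_smul, zpow_neg, zpow_ofNat,
      inv_mul_cancel₀ (pow_ne_zero 2 hq.1.ne'), one_smul]
  have hcomm : ζ₁ ^ 2 * ξ * ζ₀ = q ^ (-2 : ℤ) • (ζ₀ * (ζ₁ ^ 2 * ξ)) := by
    rw [mul_assoc, hcentral, ← mul_assoc, hζ₁, smul_mul_assoc, mul_assoc]
  have hbase : star ζ₀ * ζ₀ = 1 - q ^ (-2 : ℤ) • (ζ₁ ^ 2 * ξ) := by
    rw [← hrel3, hrel2, sub_smul, one_smul]; abel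
  rw [pow_mul_pow_eq_prod_of_mul_eq_one_sub_smul hbase hcomm]
  -- `(p : ℤ)` in the statement makes its list `List.range m` coerced to `List ℤ` via `bind`.
  simp only [List.pure_def, List.bind_eq_flatMap, ← List.map_eq_flatMap, List.map_map]
  congr 1
  refine List.map_congr_left fun p _ => ?_
  simp only [Function.comp_apply, ← zpow_natCast, ← zpow_mul]
  congr 3

/-- In `O(Σ³_q)`: `(ζ₀*)^m ζ₀^m = ∏_{p=1}^{m} (1 − q^{−2p} ζ₁² ξ)`. -/
theorem zeta_power_relation_right {A : Type*} [Ring A] [Algebra ℝ A] [StarRing A]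
    (q : ℝ) (hq : q ∈ Set.Ioo (0 : ℝ) 1)
    (ζ₀ ζ₁ : A) (ξ : Aˣ)
    (hcentral : ∀ x : A, (ξ : A) * x = x * (ξ : A))
    (hunitary : star (ξ : A) = ((ξ⁻¹ : Aˣ) : A))
    (hrel1 : ζ₀ * ζ₁ = q • (ζ₁ * ζ₀))
    (hrel2 : ζ₀ * star ζ₀ = star ζ₀ * ζ₀ + (q ^ (-2 : ℤ) - 1) • (ζ₁ ^ 2 * (ξ : A)))
    (hrel3 : ζ₀ * star ζ₀ + ζ₁ ^ 2 * (ξ : A) = 1)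
    (hrel4 : star ζ₁ = ζ₁ * (ξ : A))
    (m : ℕ) :
    (star ζ₀) ^ m * ζ₀ ^ m =
      ((List.range m).map
        (fun p => (1 : A) - q ^ (-(2 * ((p : ℤ) + 1))) • (ζ₁ ^ 2 * (ξ : A)))).prod :=
  zeta_power_relation_right_general q hq ζ₀ ζ₁ ξ hcentral hrel1 hrel2 hrel3 m
end

section
/- In O(Σ³_q), set a = ζ₁²ξ, b = ζ₀^l ζ₁ ξ^s, c₋ = ζ₀^{2l} ξ^{2s−1} for a natural number l ≥ 1 and integer s. Then b² = q^{3l} a c₋, b b* = q^{2l} a ∏_{m=0}^{l−1}(1 − q^{2m}a), and b*b = a ∏_{m=1}^{l}(1 − q^{−2m}a). -/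
/-!
Everything reduces to `q`-commutation rules for `a = ζ₁²ξ`. Evaluating `ζ₀ζ₀*ζ₀` and `ζ₀*ζ₀ζ₀*`
in two ways from `ζ₀ζ₀* = 1 - a` and `ζ₀*ζ₀ = 1 - q⁻²a` gives `ζ₀a = q²aζ₀` and `ζ₀*a = q⁻²aζ₀*`,
while `ζ₁` commutes with `a`. Since `ζ₀(1 - ca) = (1 - q²ca)ζ₀`, induction on `l` gives
`ζ₀^l ζ₀*^l = ∏_{m<l} (1 - q^{2m}a)`, and likewise `ζ₀*^l ζ₀^l = ∏_{m<l} (1 - q^{-2(m+1)}a)`.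
As `ξ^s` is central with `(ξ^s)* = ξ^{-s}`, `bb*` and `b*b` collapse to `ζ₀^l a ζ₀*^l` and
`ζ₁ξ ζ₀*^l ζ₀^l ζ₁`, while `b² = q^{3l}ac₋` only needs `ζ₀ζ₁ = qζ₁ζ₀` to sort the factors.
-/

section QCommutation

variable {R A : Type*} [CommRing R] [Ring A] [Algebra R A]

theorem pow_mul_eq_smul_mul_pow {z a : A} {t : R} (h : z * a = t • (a * z)) (n : ℕ) :
    z ^ n * a = t ^ n • (a * z ^ n) := by
  induction n with
  | zero => simp
  | succ n ih =>
    rw [pow_succ, mul_assoc, h, mul_smul_comm, ← mul_assoc, ih, smul_mul_assoc, smul_smul,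
      mul_assoc, ← pow_succ, ← pow_succ']

theorem mul_one_sub_smul_eq {z a : A} {t : R} (h : z * a = t • (a * z)) (c : R) :
    z * (1 - c • a) = (1 - (t * c) • a) * z := by
  rw [mul_sub, sub_mul, mul_one, one_mul, mul_smul_comm, h, smul_smul, mul_comm c t,
    smul_mul_assoc]

theorem Commute.list_prod_map_one_sub_smul {ι : Type*} {x a : A} (h : Commute x a)
    (L : List ι) (f : ι → R) : Commute x (L.map fun i => 1 - f i • a).prod :=
  Commute.list_prod_right _ _ <| by
    simp only [List.mem_map]
    rintro _ ⟨i, -, rfl⟩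
    exact (Commute.one_right x).sub_right (h.smul_right (f i))

theorem pow_mul_pow_eq_prod_one_sub_smul {z w a : A} {t c : R} (hza : z * a = t • (a * z))
    (hzw : z * w = 1 - c • a) (l : ℕ) :
    z ^ l * w ^ l = ((List.range l).map fun m => 1 - (t ^ m * c) • a).prod := by
  induction l with
  | zero => simp
  | succ l ih =>
    have hcomm : Commute (1 - (t ^ l * c) • a) (z ^ l * w ^ l) := by
      rw [ih]
      exact (Commute.one_left _).sub_left
        (((Commute.refl a).list_prod_map_one_sub_smul _ _).smul_left _)
    calc z ^ (l + 1) * w ^ (l + 1) = z ^ l * (z * w) * w ^ l := by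
          rw [pow_succ, pow_succ']; simp only [mul_assoc]
      _ = (1 - (t ^ l * c) • a) * (z ^ l * w ^ l) := by
          rw [hzw, mul_one_sub_smul_eq (pow_mul_eq_smul_mul_pow hza l), mul_assoc]
      _ = _ := by
          rw [hcomm.eq, ih, List.range_succ, List.map_append, List.prod_append, List.map_singleton,
            List.prod_singleton]

theorem mul_eq_smul_mul_of_mul_eq_one_sub_right {z w a : A} {c : R} (hzw : z * w = 1 - a)
    (hwz : w * z = 1 - c • a) : w * a = c • (a * w) := by
  have h : w * (z * w) = w * z * w := (mul_assoc w z w).symm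
  rw [hzw, hwz, mul_sub, sub_mul, mul_one, one_mul, smul_mul_assoc] at h
  exact sub_right_injective h

theorem mul_eq_smul_mul_of_mul_eq_one_sub_left {z w a : A} {c t : R} (hzw : z * w = 1 - a)
    (hwz : w * z = 1 - c • a) (htc : t * c = 1) : z * a = t • (a * z) := by
  have h : z * (w * z) = z * w * z := (mul_assoc z w z).symm
  rw [hzw, hwz, mul_sub, sub_mul, mul_one, one_mul, mul_smul_comm] at h
  rw [← sub_right_injective h, smul_smul, htc, one_smul]

theorem sq_pow_mul_eq_smul {z x : A} {t : R} (h : z * x = t • (x * z)) (l : ℕ) :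
    (z ^ l * x) ^ 2 = t ^ (3 * l) • (x ^ 2 * z ^ (2 * l)) := by
  calc (z ^ l * x) ^ 2 = t ^ l • (x * (z ^ (2 * l) * x)) := by
        rw [sq, ← mul_assoc, pow_mul_eq_smul_mul_pow h, smul_mul_assoc, smul_mul_assoc, two_mul,
          pow_add]
        simp only [mul_assoc]
    _ = t ^ (3 * l) • (x ^ 2 * z ^ (2 * l)) := by
        rw [pow_mul_eq_smul_mul_pow h, mul_smul_comm, smul_smul, ← pow_add, sq, mul_assoc]
        ring_nf

end QCommutation

theorem Units.star_coe_zpow {A : Type*} [Monoid A] [StarMul A] {u : Aˣ}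
    (h : star (u : A) = ↑u⁻¹) (n : ℤ) : star (↑(u ^ n) : A) = ↑(u ^ n)⁻¹ := by
  have hu : star u = u⁻¹ := Units.ext (by rw [Units.coe_star, h])
  rw [← Units.coe_star, star_zpow, hu, inv_zpow]

namespace Sigma3

variable {R A : Type*} [CommRing R] [Ring A] [Algebra R A] {ζ₀ ζ₁ a : A} {ξ : Aˣ}

theorem mul_self_eq (hcentral : ∀ x : A, (ξ : A) * x = x * (ξ : A)) {q : R}
    (hrel1 : ζ₀ * ζ₁ = q • (ζ₁ * ζ₀)) (l : ℕ) (s : ℤ) :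
    ζ₀ ^ l * ζ₁ * ↑(ξ ^ s) * (ζ₀ ^ l * ζ₁ * ↑(ξ ^ s)) =
      q ^ (3 * l) • (ζ₁ ^ 2 * ξ * (ζ₀ ^ (2 * l) * ↑(ξ ^ (2 * s - 1)))) := by
  have hv : (ξ : A) * ↑(ξ ^ (2 * s - 1)) = ↑(ξ ^ s) * ↑(ξ ^ s) := by
    rw [← Units.val_mul, ← Units.val_mul]; congr 1; group
  rw [(Commute.units_zpow_left (hcentral _) s).mul_mul_mul_comm, ← sq, sq_pow_mul_eq_smul hrel1,
    Commute.mul_mul_mul_comm (hcentral _), hv, smul_mul_assoc]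

variable [StarRing A]

theorem star_eq (hunitary : star (ξ : A) = ((ξ⁻¹ : Aˣ) : A)) (hrel4 : star ζ₁ = ζ₁ * (ξ : A))
    (l : ℕ) (s : ℤ) :
    star (ζ₀ ^ l * ζ₁ * ↑(ξ ^ s)) = ↑(ξ ^ s)⁻¹ * (ζ₁ * ξ) * star ζ₀ ^ l := by
  rw [star_mul, star_mul, star_pow, hrel4, Units.star_coe_zpow hunitary, ← mul_assoc]

theorem mul_star_eq (hunitary : star (ξ : A) = ((ξ⁻¹ : Aˣ) : A)) (hrel4 : star ζ₁ = ζ₁ * (ξ : A))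
    (ha : a = ζ₁ ^ 2 * ξ) {t : R} (hza : ζ₀ * a = t • (a * ζ₀)) (hzw : ζ₀ * star ζ₀ = 1 - a)
    (l : ℕ) (s : ℤ) :
    ζ₀ ^ l * ζ₁ * ↑(ξ ^ s) * star (ζ₀ ^ l * ζ₁ * ↑(ξ ^ s)) =
      t ^ l • (a * ((List.range l).map fun m => 1 - t ^ m • a).prod) := by
  calc ζ₀ ^ l * ζ₁ * ↑(ξ ^ s) * star (ζ₀ ^ l * ζ₁ * ↑(ξ ^ s)) = ζ₀ ^ l * a * star ζ₀ ^ l := by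
        rw [star_eq hunitary hrel4]; simp only [ha, sq, mul_assoc, Units.mul_inv_cancel_left]
    _ = t ^ l • (a * (ζ₀ ^ l * star ζ₀ ^ l)) := by
        rw [pow_mul_eq_smul_mul_pow hza, smul_mul_assoc, mul_assoc]
    _ = _ := by
        rw [pow_mul_pow_eq_prod_one_sub_smul hza (c := 1) (by rwa [one_smul])]
        simp only [mul_one]

theorem star_mul_eq (hcentral : ∀ x : A, (ξ : A) * x = x * (ξ : A))
    (hunitary : star (ξ : A) = ((ξ⁻¹ : Aˣ) : A)) (hrel4 : star ζ₁ = ζ₁ * (ξ : A))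
    (ha : a = ζ₁ ^ 2 * ξ) {t : R} (hwa : star ζ₀ * a = t • (a * star ζ₀))
    (hwz : star ζ₀ * ζ₀ = 1 - t • a) (l : ℕ) (s : ℤ) :
    star (ζ₀ ^ l * ζ₁ * ↑(ξ ^ s)) * (ζ₀ ^ l * ζ₁ * ↑(ξ ^ s)) =
      a * ((List.range l).map fun m => 1 - t ^ (m + 1) • a).prod := by
  have hζ₁a : Commute ζ₁ a := by
    rw [ha]; exact ((Commute.refl ζ₁).pow_right 2).mul_right (hcentral ζ₁).symm
  calc star (ζ₀ ^ l * ζ₁ * ↑(ξ ^ s)) * (ζ₀ ^ l * ζ₁ * ↑(ξ ^ s))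
      = ↑(ξ ^ s)⁻¹ * (ζ₁ * ξ * (star ζ₀ ^ l * ζ₀ ^ l) * ζ₁ * ↑(ξ ^ s)) := by
        rw [star_eq hunitary hrel4]; simp only [mul_assoc]
    _ = ζ₁ * ξ * (star ζ₀ ^ l * ζ₀ ^ l) * ζ₁ := by
        rw [← (Commute.units_zpow_left (hcentral _) s).eq, Units.inv_mul_cancel_left]
    _ = ζ₁ * ξ * (ζ₁ * ((List.range l).map fun m => 1 - (t ^ m * t) • a).prod) := by
        rw [pow_mul_pow_eq_prod_one_sub_smul hwa hwz, mul_assoc,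
          (hζ₁a.list_prod_map_one_sub_smul _ _).eq]
    _ = _ := by
        rw [ha, sq, mul_assoc, ← mul_assoc (ξ : A), hcentral]
        simp only [mul_assoc, ← pow_succ]

end Sigma3

theorem RPq_minus_relations_b_general {A : Type*} [Ring A] [Algebra ℝ A] [StarRing A]
    (q : ℝ) (hq : q ∈ Set.Ioo (0 : ℝ) 1)
    (ζ₀ ζ₁ : A) (ξ : Aˣ)
    (hcentral : ∀ x : A, (ξ : A) * x = x * (ξ : A))
    (hunitary : star (ξ : A) = ((ξ⁻¹ : Aˣ) : A))
    (hrel1 : ζ₀ * ζ₁ = q • (ζ₁ * ζ₀))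
    (hrel2 : ζ₀ * star ζ₀ = star ζ₀ * ζ₀ + (q ^ (-2 : ℤ) - 1) • (ζ₁ ^ 2 * (ξ : A)))
    (hrel3 : ζ₀ * star ζ₀ + ζ₁ ^ 2 * (ξ : A) = 1)
    (hrel4 : star ζ₁ = ζ₁ * (ξ : A))
    (l : ℕ) (s : ℤ)
    (a b c : A)
    (ha : a = ζ₁ ^ 2 * (ξ : A))
    (hb : b = ζ₀ ^ l * ζ₁ * ((ξ ^ s : Aˣ) : A))
    (hc : c = ζ₀ ^ (2 * l) * ((ξ ^ (2 * s - 1) : Aˣ) : A)) :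
    b * b = q ^ (3 * l) • (a * c) ∧
    b * star b =
      q ^ (2 * l) • (a * ((List.range l).map (fun m => (1 : A) - q ^ (2 * m) • a)).prod) ∧
    star b * b =
      a * ((List.range l).map (fun m => (1 : A) - q ^ (-(2 * ((m : ℤ) + 1))) • a)).prod := by
  subst hb hc
  have hq0 : q ≠ 0 := hq.1.ne'
  have hzw : ζ₀ * star ζ₀ = 1 - a := by rw [ha, ← hrel3, add_sub_cancel_right]
  have hwz : star ζ₀ * ζ₀ = 1 - q ^ (-2 : ℤ) • a := by
    rw [eq_sub_iff_add_eq, ← hrel3, hrel2, ← ha, sub_smul, one_smul]; abel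
  have hza : ζ₀ * a = (q ^ 2 : ℝ) • (a * ζ₀) :=
    mul_eq_smul_mul_of_mul_eq_one_sub_left hzw hwz (by simp [hq0])
  have hwa : star ζ₀ * a = q ^ (-2 : ℤ) • (a * star ζ₀) :=
    mul_eq_smul_mul_of_mul_eq_one_sub_right hzw hwz
  refine ⟨?_, ?_, ?_⟩
  · rw [Sigma3.mul_self_eq hcentral hrel1, ha]
  · rw [Sigma3.mul_star_eq hunitary hrel4 ha hza hzw]
    simp only [← pow_mul]
  · -- `(m : ℤ)` in the statement coerces `List.range l` to a `List ℤ` through the list monad.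
    rw [Sigma3.star_mul_eq hcentral hunitary hrel4 ha hwa hwz]
    simp only [List.bind_eq_flatMap, List.pure_def, ← List.map_eq_flatMap, List.map_map,
      Function.comp_def]
    congr; funext m
    rw [← zpow_natCast, ← zpow_mul]
    push_cast
    ring_nf

/-- Relations of `O(ℝP_q²(l;−))`: with `a = ζ₁²ξ`, `b = ζ₀^l ζ₁ ξ^s`,
`c₋ = ζ₀^{2l} ξ^{2s−1}` one has `b² = q^{3l} a c₋`,
`b b* = q^{2l} a ∏_{m=0}^{l−1}(1 − q^{2m}a)`, `b*b = a ∏_{m=1}^{l}(1 − q^{−2m}a)`. -/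
theorem RPq_minus_relations_b {A : Type*} [Ring A] [Algebra ℝ A] [StarRing A]
    (q : ℝ) (hq : q ∈ Set.Ioo (0 : ℝ) 1)
    (ζ₀ ζ₁ : A) (ξ : Aˣ)
    (hcentral : ∀ x : A, (ξ : A) * x = x * (ξ : A))
    (hunitary : star (ξ : A) = ((ξ⁻¹ : Aˣ) : A))
    (hrel1 : ζ₀ * ζ₁ = q • (ζ₁ * ζ₀))
    (hrel2 : ζ₀ * star ζ₀ = star ζ₀ * ζ₀ + (q ^ (-2 : ℤ) - 1) • (ζ₁ ^ 2 * (ξ : A)))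
    (hrel3 : ζ₀ * star ζ₀ + ζ₁ ^ 2 * (ξ : A) = 1)
    (hrel4 : star ζ₁ = ζ₁ * (ξ : A))
    (l : ℕ) (hl : 1 ≤ l) (s : ℤ)
    (a b c : A)
    (ha : a = ζ₁ ^ 2 * (ξ : A))
    (hb : b = ζ₀ ^ l * ζ₁ * ((ξ ^ s : Aˣ) : A))
    (hc : c = ζ₀ ^ (2 * l) * ((ξ ^ (2 * s - 1) : Aˣ) : A)) :
    b * b = q ^ (3 * l) • (a * c) ∧
    b * star b =
      q ^ (2 * l) • (a * ((List.range l).map (fun m => (1 : A) - q ^ (2 * m) • a)).prod) ∧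
    star b * b =
      a * ((List.range l).map (fun m => (1 : A) - q ^ (-(2 * ((m : ℤ) + 1))) • a)).prod :=
  RPq_minus_relations_b_general q hq ζ₀ ζ₁ ξ hcentral hunitary hrel1 hrel2 hrel3 hrel4 l s a b c ha
    hb hc
end

section
/- In O(Σ³_q) with a = ζ₁²ξ, b = ζ₀^l ζ₁ ξ^s, c₋ = ζ₀^{2l} ξ^{2s−1}: a b = q^{−2l} b a, a c₋ = q^{−4l} c₋ a, b c₋ = q^{−2l} c₋ b, c₋ c₋* = ∏_{m=0}^{2l−1}(1 − q^{2m}a), and c₋* c₋ = ∏_{m=1}^{2l}(1 − q^{−2m}a). -/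
/-!
Everything is a consequence of two q-commutation rules, `ζ₀ a = q² a ζ₀` (from `ζ₀ ζ₁ = q ζ₁ ζ₀`,
since `a = ζ₁² ξ` with `ξ` central) and `ζ₁ ζ₀^{2l} = q^{-2l} ζ₀^{2l} ζ₁`, together with `a ζ₁ = ζ₁ a`:
scalars accumulate multiplicatively along products and powers. For the last two relations,
`ζ₀ ζ₀* = 1 - a` and `ζ₀* ζ₀ = 1 - q⁻² a`; writing `ζ₀ⁿ⁺¹ ζ₀*ⁿ⁺¹ = ζ₀ⁿ (1 - a) ζ₀*ⁿ` and moving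
`a` across `ζ₀ⁿ` splits off the factor `1 - q²ⁿ a`, and symmetrically for `ζ₀*ⁿ⁺¹ ζ₀ⁿ⁺¹`. The
central unitary powers of `ξ` in `c₋` cancel against their adjoints.
-/

def QCommute {R A : Type*} [CommSemiring R] [Semiring A] [Algebra R A] (r : R) (x y : A) : Prop :=
  x * y = r • (y * x)

namespace QCommute

variable {R A : Type*} [CommSemiring R] [Semiring A] [Algebra R A] {r s : R} {x y z : A}

theorem _root_.Commute.qCommute (h : Commute x y) : QCommute (1 : R) x y := by
  rw [QCommute, one_smul, h.eq]

theorem symm (h : QCommute r x y) (hsr : s * r = 1) : QCommute s y x := by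
  rw [QCommute, h, smul_smul, hsr, one_smul]

theorem smul_left (h : QCommute r x y) (t : R) : QCommute r (t • x) y := by
  rw [QCommute, smul_mul_assoc, h, mul_smul_comm, smul_comm]

theorem mul_right (h₁ : QCommute r x y) (h₂ : QCommute s x z) : QCommute (r * s) x (y * z) := by
  rw [QCommute, ← mul_assoc, h₁, smul_mul_assoc, mul_assoc, h₂, mul_smul_comm, smul_smul,
    ← mul_assoc]

theorem mul_left (h₁ : QCommute r x z) (h₂ : QCommute s y z) : QCommute (r * s) (x * y) z := by
  rw [QCommute, mul_assoc, h₂, mul_smul_comm, ← mul_assoc, h₁, smul_mul_assoc, smul_smul,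
    mul_comm r, mul_assoc]

theorem mul_right_of_commute (h : QCommute r x y) (hz : Commute x z) : QCommute r x (y * z) := by
  simpa only [mul_one] using h.mul_right hz.qCommute

theorem mul_left_of_commute (h : QCommute r x z) (hy : Commute y z) : QCommute r (x * y) z := by
  simpa only [mul_one] using h.mul_left hy.qCommute

theorem commute_mul_left (hx : Commute x z) (h : QCommute r y z) : QCommute r (x * y) z := by
  simpa only [one_mul] using hx.qCommute.mul_left h

theorem pow_right (h : QCommute r x y) (n : ℕ) : QCommute (r ^ n) x (y ^ n) := by
  induction n with
  | zero => simpa using (Commute.one_right x).qCommute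
  | succ n ih => simpa only [pow_succ] using ih.mul_right h

theorem pow_left (h : QCommute r x y) (n : ℕ) : QCommute (r ^ n) (x ^ n) y := by
  induction n with
  | zero => simpa using (Commute.one_left y).qCommute
  | succ n ih => simpa only [pow_succ] using ih.mul_left h

theorem symm_zpow_neg {K A : Type*} [Field K] [Semiring A] [Algebra K A] {r : K} {n : ℕ}
    {x y : A} (h : QCommute (r ^ n) x y) (hr : r ≠ 0) : QCommute (r ^ (-(n : ℤ))) y x :=
  h.symm (by rw [zpow_neg, zpow_natCast, inv_mul_cancel₀ (pow_ne_zero n hr)])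

end QCommute

section Ring

variable {R A : Type*} [CommSemiring R] [Ring A] [Algebra R A] {r : R} {x y a : A}

theorem pow_mul_pow_eq_prod_of_qCommute_left (hxy : x * y = 1 - a) (hxa : QCommute r x a)
    (n : ℕ) : x ^ n * y ^ n = ((List.range n).map fun m => 1 - r ^ m • a).prod := by
  induction n with
  | zero => simp
  | succ n ih =>
    have hP : Commute a ((List.range n).map fun m => 1 - r ^ m • a).prod :=
      Commute.list_prod_right _ _ <| by
        simpa using fun m _ => (Commute.one_right a).sub_right ((Commute.refl a).smul_right _)
    calc x ^ (n + 1) * y ^ (n + 1) = x ^ n * (x * y) * y ^ n := by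
          rw [pow_succ, pow_succ', mul_assoc, mul_assoc, mul_assoc]
      _ = x ^ n * y ^ n - r ^ n • (a * (x ^ n * y ^ n)) := by
          rw [hxy, mul_sub, mul_one, sub_mul, hxa.pow_left n, smul_mul_assoc, mul_assoc]
      _ = _ := by
          rw [ih, hP.eq, List.prod_range_succ, mul_sub, mul_one, mul_smul_comm]

theorem pow_mul_pow_eq_prod_of_qCommute_right (hxy : x * y = 1 - a) (hay : QCommute r a y)
    (n : ℕ) : x ^ n * y ^ n = ((List.range n).map fun m => 1 - r ^ m • a).prod := by
  induction n with
  | zero => simp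
  | succ n ih =>
    calc x ^ (n + 1) * y ^ (n + 1) = x ^ n * (x * y) * y ^ n := by
          rw [pow_succ, pow_succ', mul_assoc, mul_assoc, mul_assoc]
      _ = x ^ n * y ^ n - r ^ n • (x ^ n * y ^ n * a) := by
          rw [hxy, mul_sub, mul_one, sub_mul, mul_assoc, hay.pow_right n, mul_smul_comm,
            mul_assoc]
      _ = _ := by
          rw [ih, List.prod_range_succ, mul_sub, mul_one, mul_smul_comm]

end Ring

-- The cast `(m : ℤ)` on the right makes Lean map over `List.range n` coerced to `List ℤ`.
theorem list_prod_one_sub_zpow_smul {A : Type*} [Ring A] [Algebra ℝ A] (q : ℝ) (a : A) (n : ℕ) :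
    ((List.range n).map fun m => 1 - (q ^ (-2 : ℤ)) ^ m • q ^ (-2 : ℤ) • a).prod =
      ((List.range n).map (fun m => (1 : A) - q ^ (-(2 * ((m : ℤ) + 1))) • a)).prod := by
  simp only [List.pure_def, List.bind_eq_flatMap, ← List.map_eq_flatMap, List.map_map]
  refine congrArg List.prod (List.map_congr_left fun m _ => ?_)
  rw [Function.comp_apply, smul_smul, ← pow_succ, ← zpow_natCast, ← zpow_mul, Nat.cast_succ,
    neg_mul]

section Unitary

variable {A : Type*} [Monoid A] [StarMul A] {u : A}

theorem Units.val_zpow_mem_unitary {ξ : Aˣ} (h : star (ξ : A) = ↑ξ⁻¹) (k : ℤ) :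
    ((ξ ^ k : Aˣ) : A) ∈ unitary A := by
  have hξ : (ξ : A) ∈ unitary A := by simp [Unitary.mem_iff, h]
  rw [← show Unitary.toUnits ⟨_, hξ⟩ = ξ from Units.ext rfl, ← map_zpow]
  exact SetLike.coe_mem _

theorem mul_mul_star_mul_of_mem_unitary (hu : u ∈ unitary A) (x y : A) :
    x * u * star (y * u) = x * star y := by
  rw [star_mul, mul_assoc, ← mul_assoc u, Unitary.mul_star_self_of_mem hu, one_mul]

theorem star_mul_mul_mul_of_mem_unitary (hu : u ∈ unitary A) {x y : A}
    (hc : Commute u (star x * y)) : star (x * u) * (y * u) = star x * y := by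
  rw [star_mul, mul_assoc, ← mul_assoc (star x), ← hc.eq, ← mul_assoc,
    Unitary.star_mul_self_of_mem hu, one_mul]

end Unitary

theorem RPq_minus_relations_c_general {A : Type*} [Ring A] [Algebra ℝ A] [StarRing A]
    (q : ℝ) (hq : q ∈ Set.Ioo (0 : ℝ) 1)
    (ζ₀ ζ₁ : A) (ξ : Aˣ)
    (hcentral : ∀ x : A, (ξ : A) * x = x * (ξ : A))
    (hunitary : star (ξ : A) = ((ξ⁻¹ : Aˣ) : A))
    (hrel1 : ζ₀ * ζ₁ = q • (ζ₁ * ζ₀))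
    (hrel2 : ζ₀ * star ζ₀ = star ζ₀ * ζ₀ + (q ^ (-2 : ℤ) - 1) • (ζ₁ ^ 2 * (ξ : A)))
    (hrel3 : ζ₀ * star ζ₀ + ζ₁ ^ 2 * (ξ : A) = 1)
    (l : ℕ) (s : ℤ)
    (a b c : A)
    (ha : a = ζ₁ ^ 2 * (ξ : A))
    (hb : b = ζ₀ ^ l * ζ₁ * ((ξ ^ s : Aˣ) : A))
    (hc : c = ζ₀ ^ (2 * l) * ((ξ ^ (2 * s - 1) : Aˣ) : A)) :
    a * b = q ^ (-(2 * (l : ℤ))) • (b * a) ∧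
    a * c = q ^ (-(4 * (l : ℤ))) • (c * a) ∧
    b * c = q ^ (-(2 * (l : ℤ))) • (c * b) ∧
    c * star c = ((List.range (2 * l)).map (fun m => (1 : A) - q ^ (2 * m) • a)).prod ∧
    star c * c =
      ((List.range (2 * l)).map
        (fun m => (1 : A) - q ^ (-(2 * ((m : ℤ) + 1))) • a)).prod := by
  have hq0 : q ≠ 0 := hq.1.ne'
  have hξ (k : ℤ) (x : A) : Commute ((ξ ^ k : Aˣ) : A) x := Commute.units_zpow_left (hcentral x) k
  have hpow (n : ℕ) : (q ^ (-2 : ℤ)) ^ n = q ^ (-(2 * (n : ℤ))) := by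
    rw [← zpow_natCast, ← zpow_mul, neg_mul]
  have hζ₀a : QCommute (q ^ 2) ζ₀ a :=
    ha ▸ (QCommute.pow_right hrel1 2).mul_right_of_commute (hcentral ζ₀).symm
  have haζ₀ : QCommute (q ^ (-2 : ℤ)) a ζ₀ := hζ₀a.symm_zpow_neg hq0
  have haζ₁ : Commute a ζ₁ := ha ▸ ((Commute.refl ζ₁).pow_left 2).mul_left (hcentral ζ₁)
  have hζ₁c : QCommute (q ^ (-(2 * (l : ℤ)))) ζ₁ c := by
    simpa only [hc, Nat.cast_mul, Nat.cast_ofNat] using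
      ((QCommute.pow_left hrel1 (2 * l)).symm_zpow_neg hq0).mul_right_of_commute (hξ _ ζ₁).symm
  refine ⟨?_, ?_, ?_, ?_, ?_⟩
  · exact hb ▸ hpow l ▸
      ((haζ₀.pow_right l).mul_right_of_commute haζ₁).mul_right_of_commute (hξ s a).symm
  · show QCommute _ a c
    convert hc ▸ (haζ₀.pow_right (2 * l)).mul_right_of_commute (hξ _ a).symm using 2
    rw [hpow, Nat.cast_mul, Nat.cast_ofNat, ← mul_assoc]; norm_num
  · have hζ₀c : Commute (ζ₀ ^ l) c :=
      hc ▸ (Commute.pow_pow_self ζ₀ l (2 * l)).mul_right (hξ _ _).symm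
    exact hb ▸ (QCommute.commute_mul_left hζ₀c hζ₁c).mul_left_of_commute (hξ s c)
  · rw [hc, mul_mul_star_mul_of_mem_unitary (Units.val_zpow_mem_unitary hunitary _), star_pow,
      pow_mul_pow_eq_prod_of_qCommute_left (by rw [← hrel3, ha, add_sub_cancel_right]) hζ₀a]
    simp only [pow_mul]
  · have hstar : star ζ₀ * ζ₀ = 1 - q ^ (-2 : ℤ) • a := by
      rw [ha, ← hrel3, hrel2, sub_smul, one_smul]; abel
    rw [hc, star_mul_mul_mul_of_mem_unitary (Units.val_zpow_mem_unitary hunitary _) (hξ _ _),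
      star_pow, pow_mul_pow_eq_prod_of_qCommute_right hstar (haζ₀.smul_left _),
      list_prod_one_sub_zpow_smul]

/-- Further relations of `O(ℝP_q²(l;−))`: `a b = q^{−2l} b a`, `a c₋ = q^{−4l} c₋ a`,
`b c₋ = q^{−2l} c₋ b`, `c₋ c₋* = ∏_{m=0}^{2l−1}(1 − q^{2m}a)`,
`c₋* c₋ = ∏_{m=1}^{2l}(1 − q^{−2m}a)`. -/
theorem RPq_minus_relations_c {A : Type*} [Ring A] [Algebra ℝ A] [StarRing A]
    (q : ℝ) (hq : q ∈ Set.Ioo (0 : ℝ) 1)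
    (ζ₀ ζ₁ : A) (ξ : Aˣ)
    (hcentral : ∀ x : A, (ξ : A) * x = x * (ξ : A))
    (hunitary : star (ξ : A) = ((ξ⁻¹ : Aˣ) : A))
    (hrel1 : ζ₀ * ζ₁ = q • (ζ₁ * ζ₀))
    (hrel2 : ζ₀ * star ζ₀ = star ζ₀ * ζ₀ + (q ^ (-2 : ℤ) - 1) • (ζ₁ ^ 2 * (ξ : A)))
    (hrel3 : ζ₀ * star ζ₀ + ζ₁ ^ 2 * (ξ : A) = 1)
    (hrel4 : star ζ₁ = ζ₁ * (ξ : A))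
    (l : ℕ) (hl : 1 ≤ l) (s : ℤ)
    (a b c : A)
    (ha : a = ζ₁ ^ 2 * (ξ : A))
    (hb : b = ζ₀ ^ l * ζ₁ * ((ξ ^ s : Aˣ) : A))
    (hc : c = ζ₀ ^ (2 * l) * ((ξ ^ (2 * s - 1) : Aˣ) : A)) :
    a * b = q ^ (-(2 * (l : ℤ))) • (b * a) ∧
    a * c = q ^ (-(4 * (l : ℤ))) • (c * a) ∧
    b * c = q ^ (-(2 * (l : ℤ))) • (c * b) ∧
    c * star c = ((List.range (2 * l)).map (fun m => (1 : A) - q ^ (2 * m) • a)).prod ∧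
    star c * c =
      ((List.range (2 * l)).map
        (fun m => (1 : A) - q ^ (-(2 * ((m : ℤ) + 1))) • a)).prod :=
  RPq_minus_relations_c_general q hq ζ₀ ζ₁ ξ hcentral hunitary hrel1 hrel2 hrel3 l s a b c ha hb hc
end

section
/- Let H = ℓ²(ℕ) with orthonormal basis (eₙ) and define operators on H by A(eₙ) = q^{2(ln+r)} eₙ and C(eₙ) = ∏_{m=1}^{l}(1 − q^{2(ln+r−m)})^{1/2} e_{n−1} (with C(e₀) = 0), where q ∈ (0,1), l ≥ 1, 1 ≤ r ≤ l. Then A* = A, A C = q^{−2l} C A, C C* = ∏_{m=0}^{l−1}(1 − q^{2m}A), and C* C = ∏_{m=1}^{l}(1 − q^{−2m}A). -/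
/-!
`A` is diagonal in the basis `(eₙ)` with real eigenvalues `λₙ = q^{2(ln+r)}`, and `C` is the
backward weighted shift with weights `cₙ`. Hence `A` is self-adjoint, `C*` is the forward shift
with the same weights, `C C*` and `C* C` are diagonal with eigenvalues `cₙ²` and `cₙ₋₁²`
(`0` on `e₀`), and `A C = q^{-2l} C A` because `λₙ₊₁ = q^{2l} λₙ`. Comparing eigenvalues on each
`eₙ`, the product formulas become identities between finite products of `1 - q^k`, the first
after reversing the order of the factors; on `e₀` the factor `m = r - 1` of
`∏ (1 - q^{-2(m+1)} q^{2r})` vanishes, which is where `1 ≤ r ≤ l` is needed.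
-/

noncomputable section

abbrev H : Type := lp (fun _ : ℕ => ℂ) 2

/-- The standard orthonormal basis vector `eₙ` of `ℓ²(ℕ)`. -/
def e (n : ℕ) : H := lp.single 2 n 1

open ContinuousLinearMap

lemma inner_e_left (x : H) (n : ℕ) : inner ℂ (e n) x = x n := by
  simp [e, lp.inner_single_left]

lemma e_apply (n k : ℕ) : e n k = if k = n then 1 else 0 := by
  simp [e, lp.single_apply, Pi.single_apply]

lemma ext_e {T S : H →L[ℂ] H} (h : ∀ n, T (e n) = S (e n)) : T = S :=
  lp.ext_continuousLinearMap ENNReal.ofNat_ne_top fun n => ContinuousLinearMap.ext_ring (h n)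

lemma ext_inner_e {x y : H} (h : ∀ n, inner ℂ (e n) x = inner ℂ (e n) y) : x = y :=
  lp.ext <| funext fun n => by simpa only [inner_e_left] using h n

section WeightedShift

variable {A C : H →L[ℂ] H} {a c : ℕ → ℝ}

lemma adjoint_eq_self_of_apply_e (hA : ∀ n, A (e n) = (a n : ℂ) • e n) : adjoint A = A := by
  refine ext_e fun n => ext_inner_e fun k => ?_
  rw [adjoint_inner_right, hA, hA, inner_smul_left, inner_smul_right, inner_e_left, e_apply,
    Complex.conj_ofReal]
  split_ifs with h <;> simp [h]

lemma adjoint_apply_e_of_shift (hC0 : C (e 0) = 0) (hC : ∀ n, C (e (n + 1)) = (c n : ℂ) • e n)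
    (n : ℕ) : adjoint C (e n) = (c n : ℂ) • e (n + 1) := by
  refine ext_inner_e fun k => ?_
  rw [adjoint_inner_right, inner_smul_right, inner_e_left, e_apply]
  cases k with
  | zero => simp [hC0]
  | succ k =>
    rw [hC, inner_smul_left, inner_e_left, e_apply, Complex.conj_ofReal]
    by_cases h : k = n <;> simp [h]

lemma mul_eq_smul_mul_of_shift (hA : ∀ n, A (e n) = (a n : ℂ) • e n) (hC0 : C (e 0) = 0)
    (hC : ∀ n, C (e (n + 1)) = (c n : ℂ) • e n) (k : ℂ) (hk : ∀ n, (a n : ℂ) = k * a (n + 1)) :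
    A * C = k • (C * A) := by
  refine ext_e fun n => ?_
  cases n with
  | zero => simp [hC0, hA]
  | succ n =>
    simp only [mul_apply_eq_comp, smul_apply, hC, hA, map_smul, smul_smul, hk n]
    module

lemma mul_adjoint_eq_of_shift (hC0 : C (e 0) = 0) (hC : ∀ n, C (e (n + 1)) = (c n : ℂ) • e n)
    {D : H →L[ℂ] H} (hD : ∀ n, D (e n) = ((c n ^ 2 : ℝ) : ℂ) • e n) : C * adjoint C = D := by
  refine ext_e fun n => ?_
  rw [mul_apply_eq_comp, adjoint_apply_e_of_shift hC0 hC, map_smul, hC, smul_smul, hD]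
  push_cast
  module

lemma adjoint_mul_eq_of_shift (hC0 : C (e 0) = 0) (hC : ∀ n, C (e (n + 1)) = (c n : ℂ) • e n)
    {D : H →L[ℂ] H} (hD0 : D (e 0) = 0)
    (hD : ∀ n, D (e (n + 1)) = ((c n ^ 2 : ℝ) : ℂ) • e (n + 1)) : adjoint C * C = D := by
  refine ext_e fun n => ?_
  cases n with
  | zero => rw [mul_apply_eq_comp, hC0, map_zero, hD0]
  | succ n =>
    rw [mul_apply_eq_comp, hC, map_smul, adjoint_apply_e_of_shift hC0 hC, smul_smul, hD]
    push_cast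
    module

end WeightedShift

lemma list_prod_map_one_sub_smul_apply {𝕜 E ι : Type*} [NontriviallyNormedField 𝕜]
    [NormedAddCommGroup E] [NormedSpace 𝕜 E] {T : E →L[𝕜] E} {v : E} {μ : 𝕜} (hT : T v = μ • v)
    (f : ι → 𝕜) (L : List ι) :
    (L.map fun i => 1 - f i • T).prod v = (L.map fun i => 1 - f i * μ).prod • v := by
  induction L with
  | nil => simp
  | cons i L ih =>
    simp only [List.map_cons, List.prod_cons, mul_apply_eq_comp, ih, map_smul, sub_apply,
      smul_apply, one_apply_eq_self, hT]
    module

lemma prod_map_range_eq_prod_range {M : Type*} [CommMonoid M] (f : ℕ → M) (l : ℕ) :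
    ((List.range l).map f).prod = ∏ m ∈ Finset.range l, f m :=
  rfl

/-- In the statement, `(List.range l).map (fun m => … (m : ℤ) …)` elaborates by lifting
`List.range l` to a list of integers through the list monad. -/
lemma prod_map_range_intCast {M : Type*} [CommMonoid M] (f : ℤ → M) (l : ℕ) :
    (List.map f (do let a ← List.range l; pure (a : ℤ))).prod = ∏ m ∈ Finset.range l, f m := by
  have hcast : (do let a ← List.range l; pure (a : ℤ) : List ℤ) = (List.range l).map (↑) :=
    List.flatMap_pure_eq_map _ _
  rw [hcast, List.map_map]
  rfl

lemma sq_prod_sqrt_one_sub_zpow {ι : Type*} {q : ℝ} (hq0 : 0 < q) (hq1 : q ≤ 1) (s : Finset ι)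
    {k : ι → ℤ} (hk : ∀ i ∈ s, 0 ≤ k i) :
    (∏ i ∈ s, √(1 - q ^ k i)) ^ 2 = ∏ i ∈ s, (1 - q ^ k i) := by
  rw [← Finset.prod_pow]
  exact Finset.prod_congr rfl fun i hi =>
    Real.sq_sqrt (sub_nonneg.2 (zpow_le_one₀ hq0 hq1 (hk i hi)))

section QArithmetic

variable {K : Type*} [Field K] {q : K}

lemma prod_one_sub_zpow_reflect (l r n : ℕ) :
    ∏ m ∈ Finset.range l, (1 - q ^ (2 * ((l * (n + 1) + r : ℤ) - ((m : ℤ) + 1))))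
      = ∏ m ∈ Finset.range l, (1 - q ^ (2 * m) * q ^ (2 * (l * n + r))) := by
  rw [← Finset.prod_range_reflect]
  refine Finset.prod_congr rfl fun m hm => ?_
  have hml : m < l := Finset.mem_range.1 hm
  rw [← pow_add, ← zpow_natCast]
  congr 2
  push_cast [Nat.sub_sub, Nat.cast_sub (by omega : 1 + m ≤ l)]
  ring

lemma zpow_two_mul_sub (hq : q ≠ 0) (N : ℕ) (m : ℤ) :
    q ^ (2 * ((N : ℤ) - (m + 1))) = q ^ (-(2 * (m + 1))) * q ^ (2 * N) := by
  rw [← zpow_natCast, ← zpow_add₀ hq]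
  congr 1
  push_cast
  ring

lemma prod_one_sub_zpow_mul_pow_eq_zero (hq : q ≠ 0) {l r : ℕ} (hr1 : 1 ≤ r) (hrl : r ≤ l) :
    ∏ m ∈ Finset.range l, (1 - q ^ (-(2 * ((m : ℤ) + 1))) * q ^ (2 * r)) = 0 := by
  refine Finset.prod_eq_zero (i := r - 1) (Finset.mem_range.2 (by omega)) ?_
  rw [← zpow_natCast, ← zpow_add₀ hq, Nat.cast_sub hr1]
  push_cast
  rw [show -(2 * ((r : ℤ) - 1 + 1)) + 2 * r = 0 by ring, zpow_zero, sub_self]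

end QArithmetic

theorem rep_plus_relations_general (q : ℝ) (hq : q ∈ Set.Ioo (0 : ℝ) 1)
    (l r : ℕ) (hr1 : 1 ≤ r) (hrl : r ≤ l)
    (A C : H →L[ℂ] H)
    (hA : ∀ n : ℕ, A (e n) = ((q ^ (2 * (l * n + r)) : ℝ) : ℂ) • e n)
    (hC0 : C (e 0) = 0)
    (hC : ∀ n : ℕ, C (e (n + 1)) =
      ((∏ m ∈ Finset.range l,
          Real.sqrt (1 - q ^ (2 * ((l * (n + 1) + r : ℤ) - ((m : ℤ) + 1)))) : ℝ) : ℂ) • e n) :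
    ContinuousLinearMap.adjoint A = A ∧
    A * C = ((q : ℂ) ^ (-(2 * (l : ℤ)))) • (C * A) ∧
    C * ContinuousLinearMap.adjoint C =
      ((List.range l).map (fun m => (1 : H →L[ℂ] H) - ((q : ℂ) ^ (2 * m)) • A)).prod ∧
    ContinuousLinearMap.adjoint C * C =
      ((List.range l).map
        (fun m => (1 : H →L[ℂ] H) - ((q : ℂ) ^ (-(2 * ((m : ℤ) + 1)))) • A)).prod := by
  obtain ⟨hq0, hq1⟩ := hq
  have hqC : (q : ℂ) ≠ 0 := Complex.ofReal_ne_zero.2 hq0.ne'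
  have weight_sq (n : ℕ) := sq_prod_sqrt_one_sub_zpow hq0 hq1.le (Finset.range l)
    (k := fun m : ℕ => 2 * ((l * (n + 1) + r : ℤ) - ((m : ℤ) + 1))) fun m hm => by
      have : m < l := Finset.mem_range.1 hm
      nlinarith
  refine ⟨adjoint_eq_self_of_apply_e hA, mul_eq_smul_mul_of_shift hA hC0 hC _ fun n => ?_,
    mul_adjoint_eq_of_shift hC0 hC fun n => ?_, adjoint_mul_eq_of_shift hC0 hC ?_ fun n => ?_⟩
  · push_cast
    rw [← zpow_natCast, ← zpow_natCast, ← zpow_add₀ hqC]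
    congr 1
    push_cast
    ring
  · rw [list_prod_map_one_sub_smul_apply (hA n), prod_map_range_eq_prod_range, weight_sq,
      prod_one_sub_zpow_reflect]
    push_cast
    rfl
  · rw [list_prod_map_one_sub_smul_apply (hA 0), prod_map_range_intCast]
    push_cast
    simp only [mul_zero, zero_add]
    rw [prod_one_sub_zpow_mul_pow_eq_zero hqC hr1 hrl, zero_smul]
  · rw [list_prod_map_one_sub_smul_apply (hA (n + 1)), prod_map_range_intCast, weight_sq]
    push_cast
    congr 1
    refine Finset.prod_congr rfl fun m _ => ?_
    have := zpow_two_mul_sub hqC (l * (n + 1) + r) m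
    push_cast at this
    rw [this]

/-- The operators `A(eₙ) = q^{2(ln+r)} eₙ` and
`C(eₙ) = ∏_{m=1}^{l}(1 − q^{2(ln+r−m)})^{1/2} e_{n−1}` (`C(e₀) = 0`) satisfy
`A* = A`, `A C = q^{−2l} C A`, `C C* = ∏_{m=0}^{l−1}(1 − q^{2m}A)` and
`C* C = ∏_{m=1}^{l}(1 − q^{−2m}A)`. -/
theorem rep_plus_relations (q : ℝ) (hq : q ∈ Set.Ioo (0 : ℝ) 1)
    (l r : ℕ) (hl : 1 ≤ l) (hr1 : 1 ≤ r) (hrl : r ≤ l)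
    (A C : H →L[ℂ] H)
    (hA : ∀ n : ℕ, A (e n) = ((q ^ (2 * (l * n + r)) : ℝ) : ℂ) • e n)
    (hC0 : C (e 0) = 0)
    (hC : ∀ n : ℕ, C (e (n + 1)) =
      ((∏ m ∈ Finset.range l,
          Real.sqrt (1 - q ^ (2 * ((l * (n + 1) + r : ℤ) - ((m : ℤ) + 1)))) : ℝ) : ℂ) • e n) :
    ContinuousLinearMap.adjoint A = A ∧
    A * C = ((q : ℂ) ^ (-(2 * (l : ℤ)))) • (C * A) ∧
    C * ContinuousLinearMap.adjoint C =
      ((List.range l).map (fun m => (1 : H →L[ℂ] H) - ((q : ℂ) ^ (2 * m)) • A)).prod ∧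
    ContinuousLinearMap.adjoint C * C =
      ((List.range l).map
        (fun m => (1 : H →L[ℂ] H) - ((q : ℂ) ^ (-(2 * ((m : ℤ) + 1)))) • A)).prod :=
  rep_plus_relations_general q hq l r hr1 hrl A C hA hC0 hC

end
end
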